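/- arXiv:1207.6747 — 2 statements merged into one kernel-verified Lean document; each statement's English description precedes it below -/
import Mathlib

section
/- Let R be an associative ring with identity and n ≥ 3 an integer. For any fixed pair of indices 1 ≤ i ≠ j ≤ n, the smallest normal subgroup of E_n(R) containing the single elementary matrix e_{ij}(1) is E_n(R) itself; that is, E_n(R) is normally generated by any elementary matrix e_{ij}(1). -/
/-!
For distinct indices `a, b, c` the commutator `⁅e_ab(r), e_bc(s)⁆` equals `e_ac(rs)`, and it lies
in every normal subgroup containing one of its two factors. So a normal subgroup `N` of `E_n(R)`
with `e_ab(1) ∈ N` contains every `e_ac(r)` of the same row and every `e_cb(r)` of the same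
column; for `c = b`, resp. `c = a`, one detours through a third index, which exists as `n ≥ 3`.
Moving from `(i, j)` along its row to `(i, c)`, along a column to `(a, c)` and along a row to
`(a, b)`, with `c ∉ {i, a}`, reaches every generator `e_ab(r)`.
-/

open Matrix

namespace Paper

/-! ### Generalities -/

lemma one_add_mul_aux {M : Type*} [Ring M] {x y : M} (h1 : x + y = 0) (h2 : x * y = 0) :
    (1 + x) * (1 + y) = 1 := by
  have h : (1 + x) * (1 + y) = 1 + (x + y) + x * y := by noncomm_ring
  rw [h, h1, h2, add_zero, add_zero]

/-- The group of self-homeomorphisms of a topological space, under composition. -/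
instance homeomorphGroup (X : Type*) [TopologicalSpace X] : Group (X ≃ₜ X) where
  mul a b := b.trans a
  one := Homeomorph.refl X
  inv := Homeomorph.symm
  mul_assoc a b c := rfl
  one_mul a := Homeomorph.ext fun x => rfl
  mul_one a := Homeomorph.ext fun x => rfl
  inv_mul_cancel a := Homeomorph.ext fun x => a.symm_apply_apply x

section Elementary

variable (R : Type*) [Ring R]

lemma stdBasis_cancel (n : ℕ) (i j : Fin n) (a : R) :
    Matrix.single i j a + Matrix.single i j (-a) = 0 := by
  rw [← Matrix.single_add, add_neg_cancel, Matrix.single_zero]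

/-- The elementary matrix `e_{ij}(r) = 1 + r·E_{ij}` as an invertible matrix,
i.e. an element of `GL_n(R)`. -/
def elemGL (n : ℕ) (i j : Fin n) (hij : i ≠ j) (r : R) : (Matrix (Fin n) (Fin n) R)ˣ where
  val := 1 + Matrix.single i j r
  inv := 1 + Matrix.single i j (-r)
  val_inv := one_add_mul_aux (stdBasis_cancel R n i j r)
    (Matrix.single_mul_single_of_ne (c := r) i j _ (Ne.symm hij) (-r))
  inv_val := one_add_mul_aux
    (by have := stdBasis_cancel R n i j (-r); rwa [neg_neg] at this)
    (Matrix.single_mul_single_of_ne (c := -r) i j _ (Ne.symm hij) r)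

/-- The elementary group `E_n(R)`: the subgroup of `GL_n(R)` generated by all
elementary matrices. -/
def ElementaryGroup (n : ℕ) : Subgroup (Matrix (Fin n) (Fin n) R)ˣ :=
  Subgroup.closure { A | ∃ (i j : Fin n) (hij : i ≠ j) (r : R), A = elemGL R n i j hij r }

lemma elemGL_mem (n : ℕ) (i j : Fin n) (hij : i ≠ j) (r : R) :
    elemGL R n i j hij r ∈ ElementaryGroup R n :=
  Subgroup.subset_closure ⟨i, j, hij, r, rfl⟩

/-- The diagonal matrix with `-1` at places `i`, `j` and `1` elsewhere. -/
def negPairDiag (n : ℕ) (i j : Fin n) : Matrix (Fin n) (Fin n) R :=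
  Matrix.diagonal fun k => if k = i ∨ k = j then -1 else 1

lemma negPairDiag_mul_self (n : ℕ) (i j : Fin n) :
    negPairDiag R n i j * negPairDiag R n i j = 1 := by
  rw [negPairDiag, Matrix.diagonal_mul_diagonal]
  have h : (fun k => (if k = i ∨ k = j then (-1 : R) else 1) *
      (if k = i ∨ k = j then (-1 : R) else 1)) = fun _ => (1 : R) := by
    funext k
    by_cases h : k = i ∨ k = j <;> simp [h]
  rw [h, Matrix.diagonal_one]

/-- The matrix `negPairDiag` as an invertible matrix. -/
def negPairGL (n : ℕ) (i j : Fin n) : (Matrix (Fin n) (Fin n) R)ˣ :=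
  ⟨negPairDiag R n i j, negPairDiag R n i j,
    negPairDiag_mul_self R n i j, negPairDiag_mul_self R n i j⟩

/-- The matrix `A_{i,i+1}` (0-indexed: diagonal entries `i` and `i+1` equal `-1`). -/
def APair (n : ℕ) (i : Fin (n - 1)) : (Matrix (Fin n) (Fin n) R)ˣ :=
  negPairGL R n ⟨(i : ℕ), by have := i.isLt; omega⟩ ⟨(i : ℕ) + 1, by have := i.isLt; omega⟩

/-- `E_n(R, 2R)`: the smallest normal subgroup of `E_n(R)` containing all elementary
matrices `e_{ij}(s)` with `s ∈ 2R`. -/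
def RelElementaryGroup (n : ℕ) : Subgroup ↥(ElementaryGroup R n) :=
  Subgroup.normalClosure
    { x : ↥(ElementaryGroup R n) | ∃ (i j : Fin n) (hij : i ≠ j) (r : R),
        x.val = elemGL R n i j hij (2 * r) }

end Elementary

section Symplectic

variable (S : Type*) [CommRing S]

/-- The index involution `σ` on `{0, …, 2n-1}`: `σk = k + n` if `k < n`, else `σk = k - n`. -/
def sigIdx (n : ℕ) (k : Fin (2 * n)) : Fin (2 * n) :=
  if h : (k : ℕ) < n then ⟨(k : ℕ) + n, by omega⟩
  else ⟨(k : ℕ) - n, by have := k.isLt; omega⟩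

lemma sigIdx_ne (n : ℕ) (k : Fin (2 * n)) : sigIdx n k ≠ k := by
  have hk := k.isLt
  unfold sigIdx
  split_ifs with h <;>
    · intro hEq
      have h2 := congrArg Fin.val hEq
      simp only [Fin.val_mk] at h2 -- may need adjusting
      omega

lemma sigIdx_inj (n : ℕ) {k l : Fin (2 * n)} (h : k ≠ l) : sigIdx n k ≠ sigIdx n l := by
  have hk := k.isLt
  have hl := l.isLt
  have hkl : (k : ℕ) ≠ (l : ℕ) := fun hc => h (Fin.ext hc)
  unfold sigIdx
  split_ifs with h1 h2 h2 <;>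
    · intro hEq
      have h3 := congrArg Fin.val hEq
      simp only [Fin.val_mk] at h3
      omega

/-- The symplectic elementary matrix `ρ_{ij}(a)`, as a matrix.  When `j = σi` it is
`1 + a E_{i,σi}`; otherwise it is `1 + a E_{ij} - δ a E_{σj,σi}` where `δ = 1` if `i, j`
are on the same side of `n` and `δ = -1` otherwise. -/
def symElemMat (n : ℕ) (i j : Fin (2 * n)) (a : S) : Matrix (Fin (2 * n)) (Fin (2 * n)) S :=
  if j = sigIdx n i then 1 + Matrix.single i j a
  else 1 + Matrix.single i j a -
    Matrix.single (sigIdx n j) (sigIdx n i)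
      ((if ((i : ℕ) < n ↔ (j : ℕ) < n) then 1 else -1) * a)

lemma symElemMat_mul_neg (n : ℕ) (i j : Fin (2 * n)) (hij : i ≠ j) (a : S) :
    symElemMat S n i j a * symElemMat S n i j (-a) = 1 := by
  unfold symElemMat
  set d : S := if ((i : ℕ) < n ↔ (j : ℕ) < n) then 1 else -1 with hd
  split_ifs with h
  · exact one_add_mul_aux (stdBasis_cancel S _ i j a)
      (Matrix.single_mul_single_of_ne (c := a) i j _ (Ne.symm hij) (-a))
  · rw [add_sub_assoc, add_sub_assoc]
    apply one_add_mul_aux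
    · have c1 := stdBasis_cancel S _ i j a
      have c2 := stdBasis_cancel S _ (sigIdx n j) (sigIdx n i) (d * a)
      rw [mul_neg]
      calc Matrix.single i j a - Matrix.single (sigIdx n j) (sigIdx n i) (d * a) +
            (Matrix.single i j (-a) - Matrix.single (sigIdx n j) (sigIdx n i) (-(d * a)))
          = (Matrix.single i j a + Matrix.single i j (-a)) -
            (Matrix.single (sigIdx n j) (sigIdx n i) (d * a) +
              Matrix.single (sigIdx n j) (sigIdx n i) (-(d * a))) := by abel
        _ = 0 := by rw [c1, c2, sub_zero]
    · simp only [sub_mul, mul_sub]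
      rw [Matrix.single_mul_single_of_ne (c := a) i j _ (Ne.symm hij) (-a),
        Matrix.single_mul_single_of_ne (c := a) i j _ (Ne.symm (sigIdx_ne n j)) (d * -a),
        Matrix.single_mul_single_of_ne (c := d * a) (sigIdx n j) (sigIdx n i) _ (sigIdx_ne n i) (-a),
        Matrix.single_mul_single_of_ne (c := d * a) (sigIdx n j) (sigIdx n i) _
          (sigIdx_inj n hij) (d * -a)]
      simp

/-- The symplectic elementary matrix `ρ_{ij}(a)` as an invertible matrix. -/
def symElemGL (n : ℕ) (i j : Fin (2 * n)) (hij : i ≠ j) (a : S) :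
    (Matrix (Fin (2 * n)) (Fin (2 * n)) S)ˣ where
  val := symElemMat S n i j a
  inv := symElemMat S n i j (-a)
  val_inv := symElemMat_mul_neg S n i j hij a
  inv_val := by have := symElemMat_mul_neg S n i j hij (-a); rwa [neg_neg] at this

/-- The elementary symplectic group `Ep_{2n}(S)`, generated by all symplectic
elementary matrices. -/
def EpGroup (n : ℕ) : Subgroup (Matrix (Fin (2 * n)) (Fin (2 * n)) S)ˣ :=
  Subgroup.closure
    { A | ∃ (i j : Fin (2 * n)) (hij : i ≠ j) (a : S), A = symElemGL S n i j hij a }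

/-- The matrix `J = [[0, I_n], [-I_n, 0]]` of the standard symplectic form. -/
def Jmat (n : ℕ) : Matrix (Fin (2 * n)) (Fin (2 * n)) S :=
  Matrix.of fun i j =>
    if (i : ℕ) + n = (j : ℕ) then 1 else if (j : ℕ) + n = (i : ℕ) then -1 else 0

/-- The symplectic group `Sp_{2n}(S)`: invertible `2n × 2n` matrices `M` with
`Mᵀ * J * M = J`. -/
def SpGroup (n : ℕ) : Subgroup (Matrix (Fin (2 * n)) (Fin (2 * n)) S)ˣ where
  carrier := { M | (↑M : Matrix (Fin (2 * n)) (Fin (2 * n)) S)ᵀ * Jmat S n * ↑M = Jmat S n }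
  one_mem' := by simp
  mul_mem' := by
    intro a b ha hb
    show (↑(a * b) : Matrix (Fin (2 * n)) (Fin (2 * n)) S)ᵀ * Jmat S n * (↑(a * b) : Matrix (Fin (2 * n)) (Fin (2 * n)) S) = Jmat S n
    rw [Units.val_mul, Matrix.transpose_mul]
    calc (↑b : Matrix (Fin (2*n)) (Fin (2*n)) S)ᵀ * (↑a : Matrix (Fin (2*n)) (Fin (2*n)) S)ᵀ *
          Jmat S n * (↑a * ↑b)
        = (↑b : Matrix (Fin (2*n)) (Fin (2*n)) S)ᵀ *
            ((↑a : Matrix (Fin (2*n)) (Fin (2*n)) S)ᵀ * Jmat S n * ↑a) * ↑b := by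
          noncomm_ring
      _ = (↑b : Matrix (Fin (2*n)) (Fin (2*n)) S)ᵀ * Jmat S n * ↑b := by rw [ha]
      _ = Jmat S n := hb
  inv_mem' := by
    intro a ha
    have ha' : (↑a : Matrix (Fin (2 * n)) (Fin (2 * n)) S)ᵀ * Jmat S n *
        (↑a : Matrix (Fin (2 * n)) (Fin (2 * n)) S) = Jmat S n := ha
    show ((a⁻¹ : (Matrix (Fin (2 * n)) (Fin (2 * n)) S)ˣ) :
        Matrix (Fin (2 * n)) (Fin (2 * n)) S)ᵀ * Jmat S n *
        ((a⁻¹ : (Matrix (Fin (2 * n)) (Fin (2 * n)) S)ˣ) :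
        Matrix (Fin (2 * n)) (Fin (2 * n)) S) = Jmat S n
    set A : Matrix (Fin (2 * n)) (Fin (2 * n)) S := ↑a with hA
    set B : Matrix (Fin (2 * n)) (Fin (2 * n)) S := ((a⁻¹ :
        (Matrix (Fin (2 * n)) (Fin (2 * n)) S)ˣ) : Matrix (Fin (2 * n)) (Fin (2 * n)) S) with hB
    have h1 : A * B = 1 := a.mul_inv
    calc Bᵀ * Jmat S n * B
        = Bᵀ * (Aᵀ * Jmat S n * A) * B := by rw [ha']
      _ = (A * B)ᵀ * Jmat S n * (A * B) := by rw [Matrix.transpose_mul]; noncomm_ring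
      _ = Jmat S n := by rw [h1]; simp

end Symplectic

section Extra

variable (R : Type*) [Ring R]

/-- Index of the `(2i-1)`-th row (1-indexed), i.e. `2i` 0-indexed. -/
def bIdx0 (k : ℕ) (i : Fin k) : Fin (2 * k) := ⟨2 * (i : ℕ), by have := i.isLt; omega⟩

def bIdx1 (k : ℕ) (i : Fin k) : Fin (2 * k) := ⟨2 * (i : ℕ) + 1, by have := i.isLt; omega⟩

lemma bIdx_ne (k : ℕ) (i : Fin k) : bIdx0 k i ≠ bIdx1 k i := by
  simp only [bIdx0, bIdx1, ne_eq, Fin.mk.injEq]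
  omega

/-- The matrix `B_i = e_{2i-1,2i}(1) e_{2i,2i-1}(-1) e_{2i-1,2i}(1) e_{2i,2i-1}(-1)`
(1-indexed) in `E_{2k}(R)`. -/
def Bmat (k : ℕ) (i : Fin k) : (Matrix (Fin (2 * k)) (Fin (2 * k)) R)ˣ :=
  elemGL R (2 * k) (bIdx0 k i) (bIdx1 k i) (bIdx_ne k i) 1 *
  elemGL R (2 * k) (bIdx1 k i) (bIdx0 k i) (bIdx_ne k i).symm (-1) *
  elemGL R (2 * k) (bIdx0 k i) (bIdx1 k i) (bIdx_ne k i) 1 *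
  elemGL R (2 * k) (bIdx1 k i) (bIdx0 k i) (bIdx_ne k i).symm (-1)

end Extra

section SymplecticExtra

variable (S : Type*) [CommRing S]

def cIdx0 (n : ℕ) (i : Fin n) : Fin (2 * n) := ⟨(i : ℕ), by have := i.isLt; omega⟩

def cIdx1 (n : ℕ) (i : Fin n) : Fin (2 * n) := ⟨n + (i : ℕ), by have := i.isLt; omega⟩

lemma cIdx_ne (n : ℕ) (i : Fin n) : cIdx0 n i ≠ cIdx1 n i := by
  have := i.pos
  simp only [cIdx0, cIdx1, ne_eq, Fin.mk.injEq]
  omega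

/-- The matrix `C_i = ρ_{i,n+i}(1) ρ_{n+i,i}(-1) ρ_{i,n+i}(1) ρ_{n+i,i}(-1)` in
`Sp_{2n}(S)`. -/
def Cmat (n : ℕ) (i : Fin n) : (Matrix (Fin (2 * n)) (Fin (2 * n)) S)ˣ :=
  symElemGL S n (cIdx0 n i) (cIdx1 n i) (cIdx_ne n i) 1 *
  symElemGL S n (cIdx1 n i) (cIdx0 n i) (cIdx_ne n i).symm (-1) *
  symElemGL S n (cIdx0 n i) (cIdx1 n i) (cIdx_ne n i) 1 *
  symElemGL S n (cIdx1 n i) (cIdx0 n i) (cIdx_ne n i).symm (-1)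

/-- The equivalence `Fin n ⊕ Fin n ≃ Fin (2 * n)`. -/
def finDouble (n : ℕ) : Fin n ⊕ Fin n ≃ Fin (2 * n) :=
  finSumFinEquiv.trans (finCongr (two_mul n).symm)

/-- The block-diagonal matrix `diag(A, B)` as a `2n × 2n` matrix. -/
def blockDiag2 (n : ℕ) (A B : Matrix (Fin n) (Fin n) S) :
    Matrix (Fin (2 * n)) (Fin (2 * n)) S :=
  Matrix.reindex (finDouble n) (finDouble n) (Matrix.fromBlocks A 0 0 B)

lemma blockDiag2_mul (n : ℕ) (A B A' B' : Matrix (Fin n) (Fin n) S) :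
    blockDiag2 S n A B * blockDiag2 S n A' B' = blockDiag2 S n (A * A') (B * B') := by
  unfold blockDiag2
  rw [Matrix.reindex_apply, Matrix.reindex_apply, Matrix.reindex_apply,
    Matrix.submatrix_mul_equiv, Matrix.fromBlocks_multiply]
  simp

lemma blockDiag2_one (n : ℕ) : blockDiag2 S n 1 1 = 1 := by
  unfold blockDiag2
  rw [Matrix.reindex_apply, Matrix.fromBlocks_one, Matrix.submatrix_one_equiv]

/-- The hyperbolic embedding `A ↦ diag(A, (Aᵀ)⁻¹) = diag(A, (A⁻¹)ᵀ)` from `GL_n(S)`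
to `GL_{2n}(S)`. -/
def hypGL (n : ℕ) (A : (Matrix (Fin n) (Fin n) S)ˣ) :
    (Matrix (Fin (2 * n)) (Fin (2 * n)) S)ˣ where
  val := blockDiag2 S n ↑A ((↑(A⁻¹) : Matrix (Fin n) (Fin n) S)ᵀ)
  inv := blockDiag2 S n ↑(A⁻¹) ((↑A : Matrix (Fin n) (Fin n) S)ᵀ)
  val_inv := by
    rw [blockDiag2_mul, ← Matrix.transpose_mul, A.mul_inv, Matrix.transpose_one,
      blockDiag2_one]
  inv_val := by
    rw [blockDiag2_mul, ← Matrix.transpose_mul, A.inv_mul, Matrix.transpose_one,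
      blockDiag2_one]

end SymplecticExtra

section NormalGeneration

open scoped commutatorElement

lemma one_add_mul_one_add_mul_one_sub_mul_one_sub {M : Type*} [Ring M] {x y : M}
    (hx : x * x = 0) (hy : y * y = 0) (hyx : y * x = 0) :
    (1 + x) * (1 + y) * (1 - x) * (1 - y) = 1 + x * y := by
  have hxyx : x * y * x = 0 := by rw [mul_assoc, hyx, mul_zero]
  calc (1 + x) * (1 + y) * (1 - x) * (1 - y)
      = (1 + y + x * y - x * x - y * x - x * y * x) * (1 - y) := by noncomm_ring
    _ = (1 + y + x * y) * (1 - y) := by rw [hx, hyx, hxyx]; noncomm_ring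
    _ = 1 + x * y - y * y - x * (y * y) := by noncomm_ring
    _ = 1 + x * y := by rw [hy, mul_zero, sub_zero, sub_zero]

variable {R : Type*} [Ring R] {n : ℕ}

lemma elemGL_inv {a b : Fin n} (hab : a ≠ b) (r : R) :
    (elemGL R n a b hab r)⁻¹ = elemGL R n a b hab (-r) :=
  Units.ext rfl

lemma elemGL_commutator {a b c : Fin n} (hab : a ≠ b) (hbc : b ≠ c) (hac : a ≠ c) (r s : R) :
    ⁅elemGL R n a b hab r, elemGL R n b c hbc s⁆ = elemGL R n a c hac (r * s) := by
  ext1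
  rw [commutatorElement_def, elemGL_inv, elemGL_inv]
  change (1 + single a b r) * (1 + single b c s) * (1 + single a b (-r)) *
      (1 + single b c (-s)) = 1 + single a c (r * s)
  rw [← single_neg, ← single_neg, ← sub_eq_add_neg, ← sub_eq_add_neg,
    one_add_mul_one_add_mul_one_sub_mul_one_sub
      (single_mul_single_of_ne (c := r) a b a hab.symm r)
      (single_mul_single_of_ne (c := s) b c b hbc.symm s)
      (single_mul_single_of_ne (c := s) b c a hac.symm r),
    single_mul_single_same]

def elem (a b : Fin n) (hab : a ≠ b) (r : R) : ElementaryGroup R n :=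
  ⟨elemGL R n a b hab r, elemGL_mem R n a b hab r⟩

lemma elem_commutator {a b c : Fin n} (hab : a ≠ b) (hbc : b ≠ c) (hac : a ≠ c) (r s : R) :
    ⁅elem a b hab r, elem b c hbc s⁆ = elem a c hac (r * s) :=
  Subtype.ext (elemGL_commutator hab hbc hac r s)

lemma ElementaryGroup.eq_top_of_elem_mem {N : Subgroup (ElementaryGroup R n)}
    (h : ∀ a b (hab : a ≠ b) (r : R), elem a b hab r ∈ N) : N = ⊤ := by
  refine eq_top_iff.2 <|
    Subgroup.closure_closure_coe_preimage.ge.trans ((Subgroup.closure_le N).2 ?_)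
  rintro ⟨x, -⟩ ⟨a, b, hab, r, rfl⟩
  exact h a b hab r

variable {N : Subgroup (ElementaryGroup R n)} [N.Normal]

lemma elem_mem_of_left_mem {a b c : Fin n} (hab : a ≠ b) (hbc : b ≠ c) (hac : a ≠ c) {r : R}
    (h : elem a b hab r ∈ N) (s : R) : elem a c hac (r * s) ∈ N := by
  rw [← elem_commutator hab hbc hac]
  exact Subgroup.commutator_le_left N ⊤ <|
    Subgroup.commutator_mem_commutator h (Subgroup.mem_top _)

lemma elem_mem_of_right_mem {a b c : Fin n} (hab : a ≠ b) (hbc : b ≠ c) (hac : a ≠ c) {s : R}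
    (h : elem b c hbc s ∈ N) (r : R) : elem a c hac (r * s) ∈ N := by
  rw [← elem_commutator hab hbc hac]
  exact Subgroup.commutator_le_right ⊤ N <|
    Subgroup.commutator_mem_commutator (Subgroup.mem_top _) h

lemma elem_mem_of_mem_same_row (hn : 2 < n) {a b c : Fin n} (hab : a ≠ b) (hac : a ≠ c)
    (h : elem a b hab (1 : R) ∈ N) (r : R) : elem a c hac r ∈ N := by
  obtain rfl | hbc := eq_or_ne b c
  · obtain ⟨d, hda, hdb⟩ := Fin.exists_ne_and_ne_of_two_lt a b hn
    have had : elem a d hda.symm r ∈ N :=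
      one_mul r ▸ elem_mem_of_left_mem hab hdb.symm _ h r
    exact mul_one r ▸ elem_mem_of_left_mem hda.symm hdb hab had 1
  · exact one_mul r ▸ elem_mem_of_left_mem hab hbc hac h r

lemma elem_mem_of_mem_same_col (hn : 2 < n) {a b c : Fin n} (hab : a ≠ b) (hcb : c ≠ b)
    (h : elem a b hab (1 : R) ∈ N) (r : R) : elem c b hcb r ∈ N := by
  obtain rfl | hca := eq_or_ne c a
  · obtain ⟨d, hda, hdb⟩ := Fin.exists_ne_and_ne_of_two_lt c b hn
    have hdb' : elem d b hdb r ∈ N := mul_one r ▸ elem_mem_of_right_mem hda hab hdb h r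
    exact one_mul r ▸ elem_mem_of_right_mem hda.symm hdb hab hdb' 1
  · exact mul_one r ▸ elem_mem_of_right_mem hca hab hcb h r

end NormalGeneration

/-- For `n ≥ 3`, the group `E_n(R)` is normally generated by any single
elementary matrix `e_{ij}(1)`. -/
theorem statement5 (R : Type*) [Ring R] (n : ℕ) (hn : 3 ≤ n) (i j : Fin n) (hij : i ≠ j) :
    Subgroup.normalClosure
      {(⟨elemGL R n i j hij 1, elemGL_mem R n i j hij 1⟩ : ↥(ElementaryGroup R n))} = ⊤ := by
  set N := Subgroup.normalClosure {elem i j hij (1 : R)}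
  have hij_mem : elem i j hij (1 : R) ∈ N := Subgroup.subset_normalClosure rfl
  refine ElementaryGroup.eq_top_of_elem_mem fun a b hab r => ?_
  obtain ⟨c, hci, hca⟩ := Fin.exists_ne_and_ne_of_two_lt i a hn
  have hic : elem i c hci.symm (1 : R) ∈ N := elem_mem_of_mem_same_row hn hij _ hij_mem 1
  have hac : elem a c hca.symm (1 : R) ∈ N := elem_mem_of_mem_same_col hn _ _ hic 1
  exact elem_mem_of_mem_same_row hn _ hab hac r

end Paper
end

section
/- Let R be a commutative ring with identity and n ≥ 3 an integer. For A ∈ GL_n(R), let h(A) denote the block-diagonal 2n×2n matrix diag(A, (Aᵀ)^{−1}) (the hyperbolic embedding). Then h(A) ∈ Sp_{2n}(R) for every A ∈ GL_n(R), h maps E_n(R) into the elementary symplectic group Ep_{2n}(R), and the smallest normal subgroup of Ep_{2n}(R) containing the set {h(A) : A ∈ E_n(R)} is Ep_{2n}(R) itself; that is, Ep_{2n}(R) is normally generated by the hyperbolic image of E_n(R). -/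
open Matrix

namespace Paper

/-!
The hyperbolic map `h` is a homomorphism sending `e_ij(a)` to `ρ_ij(a)` and `e_ji(-a)` to
`ρ_{n+i,n+j}(a)` (`i, j ≤ n`), so `h(E_n)` contains every generator `ρ_IJ` with `I, J` on the
same side of `n`. The others are commutators of these with elementary matrices, using a third
index `k ∉ {i, j}`:
`⁅ρ_ik(a), ρ_{k,σj}(1)⁆ = ρ_{i,σj}(a)` for `i ≠ j`, and
`⁅ρ_ij(1), ρ_{j,σj}(a)⁆ = ρ_{i,σj}(a) ρ_{i,σi}(a)`.
Hence they lie in every normal subgroup of `Ep_{2n}` containing `h(E_n)`.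
-/

open scoped commutatorElement in
lemma commutatorElement_eq_iff {G : Type*} [Group G] {u v w : G} :
    ⁅u, v⁆ = w ↔ u * v = w * (v * u) := by
  rw [commutatorElement_def, mul_inv_eq_iff_eq_mul, mul_inv_eq_iff_eq_mul, mul_assoc]

section Sides

variable {n : ℕ}

/-- Index `i` on side `b` of `Fin (2 * n)`: `i` for `false`, `n + i` for `true`. -/
def sideIdx (n : ℕ) : Bool → Fin n → Fin (2 * n)
  | false, i => cIdx0 n i
  | true, i => cIdx1 n i

@[simp]
lemma sideIdx_inj {b c : Bool} {i j : Fin n} :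
    sideIdx n b i = sideIdx n c j ↔ b = c ∧ i = j := by
  have := i.isLt
  have := j.isLt
  cases b <;> cases c <;> simp [sideIdx, cIdx0, cIdx1, Fin.ext_iff] <;> omega

@[simp]
lemma val_sideIdx_lt_iff (b : Bool) (i : Fin n) : (sideIdx n b i : ℕ) < n ↔ b = false := by
  cases b <;> simp [sideIdx, cIdx0, cIdx1]

@[simp]
lemma sigIdx_sideIdx (b : Bool) (i : Fin n) : sigIdx n (sideIdx n b i) = sideIdx n (!b) i := by
  cases b <;> simp [sigIdx, sideIdx, cIdx0, cIdx1, add_comm]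

lemma exists_sideIdx_eq (I : Fin (2 * n)) : ∃ b i, sideIdx n b i = I := by
  by_cases h : (I : ℕ) < n
  · exact ⟨false, ⟨I, h⟩, rfl⟩
  · exact ⟨true, ⟨I - n, by omega⟩, Fin.ext (by simp [sideIdx, cIdx1]; omega)⟩

lemma sideIdx_ne_sideIdx (b : Bool) {i j : Fin n} (hij : i ≠ j) :
    sideIdx n b i ≠ sideIdx n b j := by
  simpa using hij

lemma sideIdx_ne_sideIdx_not (b : Bool) (i j : Fin n) : sideIdx n b i ≠ sideIdx n (!b) j := by
  simp

lemma finDouble_inl (i : Fin n) : finDouble n (Sum.inl i) = sideIdx n false i := by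
  simp [finDouble, sideIdx, cIdx0, Fin.ext_iff]

lemma finDouble_inr (i : Fin n) : finDouble n (Sum.inr i) = sideIdx n true i := by
  simp [finDouble, sideIdx, cIdx1, Fin.ext_iff]
  omega

end Sides

section Symplectic

open scoped commutatorElement

variable {S : Type*} [CommRing S] {n : ℕ}

lemma symElemMat_sideIdx_sideIdx (b : Bool) (i j : Fin n) (a : S) :
    symElemMat S n (sideIdx n b i) (sideIdx n b j) a =
      1 + single (sideIdx n b i) (sideIdx n b j) a
        - single (sideIdx n (!b) j) (sideIdx n (!b) i) a := by
  simp [symElemMat]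

lemma symElemMat_sideIdx_sideIdx_not (b : Bool) {i j : Fin n} (hij : i ≠ j) (a : S) :
    symElemMat S n (sideIdx n b i) (sideIdx n (!b) j) a =
      1 + single (sideIdx n b i) (sideIdx n (!b) j) a
        + single (sideIdx n b j) (sideIdx n (!b) i) a := by
  simp [symElemMat, Ne.symm hij, ← single_neg]

lemma symElemMat_sideIdx_sideIdx_not_self (b : Bool) (i : Fin n) (a : S) :
    symElemMat S n (sideIdx n b i) (sideIdx n (!b) i) a =
      1 + single (sideIdx n b i) (sideIdx n (!b) i) a := by
  simp [symElemMat]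

variable (S) in
def epGen (n : ℕ) (I J : Fin (2 * n)) (hIJ : I ≠ J) (a : S) : EpGroup S n :=
  ⟨symElemGL S n I J hIJ a, Subgroup.subset_closure ⟨I, J, hIJ, a, rfl⟩⟩

lemma commutatorElement_epGen_sideIdx (b : Bool) {i j k : Fin n} (hij : i ≠ j) (hik : i ≠ k)
    (hjk : j ≠ k) (a : S) :
    ⁅epGen S n (sideIdx n b i) (sideIdx n b k) (sideIdx_ne_sideIdx b hik) a,
      epGen S n (sideIdx n b k) (sideIdx n (!b) j) (sideIdx_ne_sideIdx_not b k j) 1⁆ =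
      epGen S n (sideIdx n b i) (sideIdx n (!b) j) (sideIdx_ne_sideIdx_not b i j) a := by
  rw [commutatorElement_eq_iff]
  apply Subtype.ext
  apply Units.ext
  simp only [Subgroup.coe_mul, Units.val_mul, epGen, symElemGL, symElemMat_sideIdx_sideIdx,
    symElemMat_sideIdx_sideIdx_not _ hij, symElemMat_sideIdx_sideIdx_not _ hjk.symm]
  simp [mul_add, add_mul, mul_sub, sub_mul, single_mul_single_same, single_mul_single_of_ne,
    hij, hik, hjk, hij.symm, hik.symm, hjk.symm]
  abel

lemma commutatorElement_epGen_sideIdx_self (b : Bool) {i j : Fin n} (hij : i ≠ j) (a : S) :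
    ⁅epGen S n (sideIdx n b i) (sideIdx n b j) (sideIdx_ne_sideIdx b hij) 1,
      epGen S n (sideIdx n b j) (sideIdx n (!b) j) (sideIdx_ne_sideIdx_not b j j) a⁆ =
      epGen S n (sideIdx n b i) (sideIdx n (!b) j) (sideIdx_ne_sideIdx_not b i j) a *
        epGen S n (sideIdx n b i) (sideIdx n (!b) i) (sideIdx_ne_sideIdx_not b i i) a := by
  rw [commutatorElement_eq_iff]
  apply Subtype.ext
  apply Units.ext
  simp only [Subgroup.coe_mul, Units.val_mul, epGen, symElemGL, symElemMat_sideIdx_sideIdx,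
    symElemMat_sideIdx_sideIdx_not _ hij, symElemMat_sideIdx_sideIdx_not_self]
  simp [mul_add, add_mul, mul_sub, sub_mul, single_mul_single_same, single_mul_single_of_ne,
    hij, hij.symm]
  abel

end Symplectic

section Hyperbolic

variable {S : Type*} [CommRing S] {n : ℕ}

lemma blockDiag2_add (A A' B B' : Matrix (Fin n) (Fin n) S) :
    blockDiag2 S n (A + A') (B + B') = blockDiag2 S n A B + blockDiag2 S n A' B' := by
  have : fromBlocks (A + A') 0 0 (B + B') = fromBlocks A 0 0 B + fromBlocks A' 0 0 B' := by
    rw [fromBlocks_add, add_zero]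
  rw [blockDiag2, this]
  rfl

lemma blockDiag2_transpose (A B : Matrix (Fin n) (Fin n) S) :
    (blockDiag2 S n A B)ᵀ = blockDiag2 S n Aᵀ Bᵀ := by
  simp [blockDiag2, transpose_submatrix, fromBlocks_transpose]

lemma blockDiag2_single_zero (i j : Fin n) (a : S) :
    blockDiag2 S n (single i j a) 0 = single (sideIdx n false i) (sideIdx n false j) a := by
  have : fromBlocks (single i j a) 0 0 (0 : Matrix (Fin n) (Fin n) S) =
      single (Sum.inl i) (Sum.inl j) a := by
    ext (_ | _) (_ | _) <;> simp [single_apply]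
  rw [blockDiag2, this, reindex_apply, submatrix_single_equiv, Equiv.symm_symm,
    finDouble_inl, finDouble_inl]

lemma blockDiag2_zero_single (i j : Fin n) (a : S) :
    blockDiag2 S n 0 (single i j a) = single (sideIdx n true i) (sideIdx n true j) a := by
  have : fromBlocks (0 : Matrix (Fin n) (Fin n) S) 0 0 (single i j a) =
      single (Sum.inr i) (Sum.inr j) a := by
    ext (_ | _) (_ | _) <;> simp [single_apply]
  rw [blockDiag2, this, reindex_apply, submatrix_single_equiv, Equiv.symm_symm,
    finDouble_inr, finDouble_inr]

lemma Jmat_eq_reindex_fromBlocks :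
    Jmat S n = reindex (finDouble n) (finDouble n) (fromBlocks 0 1 (-1) 0) := by
  ext p q
  obtain ⟨p, rfl⟩ := (finDouble n).surjective p
  obtain ⟨q, rfl⟩ := (finDouble n).surjective q
  rcases p with p | p <;> rcases q with q | q <;> have := p.isLt <;> have := q.isLt <;>
    rw [reindex_apply, submatrix_apply, Equiv.symm_apply_apply, Equiv.symm_apply_apply] <;>
    simp [Jmat, finDouble_inl, finDouble_inr, sideIdx, cIdx0, cIdx1, one_apply, Fin.ext_iff] <;>
    split_ifs <;> first | omega | simp

lemma hypGL_mem_SpGroup (A : (Matrix (Fin n) (Fin n) S)ˣ) : hypGL S n A ∈ SpGroup S n := by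
  show (blockDiag2 S n _ _)ᵀ * Jmat S n * blockDiag2 S n _ _ = Jmat S n
  rw [blockDiag2_transpose, Jmat_eq_reindex_fromBlocks]
  simp only [blockDiag2, reindex_apply, submatrix_mul_equiv, fromBlocks_multiply]
  simp [← transpose_mul]

variable (S n) in
def hypHom : (Matrix (Fin n) (Fin n) S)ˣ →* (Matrix (Fin (2 * n)) (Fin (2 * n)) S)ˣ where
  toFun := hypGL S n
  map_one' := Units.ext <| by simp [hypGL, blockDiag2_one]
  map_mul' A B := Units.ext <| by simp [hypGL, blockDiag2_mul]

lemma blockDiag2_one_add_single (i j : Fin n) (a b : S) :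
    blockDiag2 S n (1 + single i j a) (1 + single j i b) =
      1 + single (sideIdx n false i) (sideIdx n false j) a
        + single (sideIdx n true j) (sideIdx n true i) b := by
  rw [← add_zero (1 + single i j a), ← zero_add (single j i b), ← add_assoc, blockDiag2_add,
    blockDiag2_add, blockDiag2_one, blockDiag2_single_zero, blockDiag2_zero_single]

lemma hypGL_elemGL {i j : Fin n} (hij : i ≠ j) (a : S) :
    (hypGL S n (elemGL S n i j hij a) : Matrix (Fin (2 * n)) (Fin (2 * n)) S) =
      symElemMat S n (sideIdx n false i) (sideIdx n false j) a := by
  show blockDiag2 S n (1 + single i j a) (1 + single i j (-a))ᵀ = _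
  rw [transpose_add, transpose_one, transpose_single, blockDiag2_one_add_single,
    symElemMat_sideIdx_sideIdx, ← single_neg, sub_eq_add_neg]
  rfl

lemma hypGL_elemGL_neg {i j : Fin n} (hij : i ≠ j) (a : S) :
    (hypGL S n (elemGL S n j i hij.symm (-a)) : Matrix (Fin (2 * n)) (Fin (2 * n)) S) =
      symElemMat S n (sideIdx n true i) (sideIdx n true j) a := by
  show blockDiag2 S n (1 + single j i (-a)) (1 + single j i (-(-a)))ᵀ = _
  rw [transpose_add, transpose_one, transpose_single, neg_neg, blockDiag2_one_add_single,
    symElemMat_sideIdx_sideIdx, Bool.not_true, ← single_neg, sub_eq_add_neg]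
  abel

lemma hypGL_mem_EpGroup {A : (Matrix (Fin n) (Fin n) S)ˣ} (hA : A ∈ ElementaryGroup S n) :
    hypGL S n A ∈ EpGroup S n := by
  suffices ElementaryGroup S n ≤ (EpGroup S n).comap (hypHom S n) from this hA
  refine Subgroup.closure_le _ |>.mpr ?_
  rintro _ ⟨i, j, hij, a, rfl⟩
  exact Subgroup.subset_closure
    ⟨_, _, sideIdx_ne_sideIdx false hij, a, Units.ext (hypGL_elemGL hij a)⟩

lemma exists_mem_elementaryGroup_hypGL_eq (b : Bool) {i j : Fin n} (hij : i ≠ j) (a : S) :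
    ∃ A ∈ ElementaryGroup S n, (hypGL S n A : Matrix (Fin (2 * n)) (Fin (2 * n)) S) =
      symElemMat S n (sideIdx n b i) (sideIdx n b j) a := by
  cases b
  exacts [⟨_, elemGL_mem S n i j hij a, hypGL_elemGL hij a⟩,
    ⟨_, elemGL_mem S n j i hij.symm (-a), hypGL_elemGL_neg hij a⟩]

end Hyperbolic

section NormalGeneration

variable {S : Type*} [CommRing S] {n : ℕ} {N : Subgroup (EpGroup S n)} [N.Normal]

lemma epGen_sideIdx_not_mem (hn : 3 ≤ n)
    (hN : ∀ b {i j : Fin n} (hij : i ≠ j) (a : S),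
      epGen S n (sideIdx n b i) (sideIdx n b j) (sideIdx_ne_sideIdx b hij) a ∈ N)
    (b : Bool) {i j : Fin n} (hij : i ≠ j) (a : S) :
    epGen S n (sideIdx n b i) (sideIdx n (!b) j) (sideIdx_ne_sideIdx_not b i j) a ∈ N := by
  obtain ⟨k, hki, hkj⟩ := ENat.exists_ne_ne_of_three_le (by simpa using hn) i j
  rw [← commutatorElement_epGen_sideIdx b hij hki.symm hkj.symm a]
  exact Subgroup.commutator_le_left N ⊤
    (Subgroup.commutator_mem_commutator (hN b hki.symm a) (Subgroup.mem_top _))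

lemma epGen_sideIdx_not_self_mem (hn : 3 ≤ n)
    (hN : ∀ b {i j : Fin n} (hij : i ≠ j) (a : S),
      epGen S n (sideIdx n b i) (sideIdx n b j) (sideIdx_ne_sideIdx b hij) a ∈ N)
    (b : Bool) (i : Fin n) (a : S) :
    epGen S n (sideIdx n b i) (sideIdx n (!b) i) (sideIdx_ne_sideIdx_not b i i) a ∈ N := by
  obtain ⟨j, hji, -⟩ := ENat.exists_ne_ne_of_three_le (by simpa using hn) i i
  have h := Subgroup.commutator_le_left N ⊤ (Subgroup.commutator_mem_commutator
    (hN b hji.symm 1) (Subgroup.mem_top (epGen S n (sideIdx n b j) (sideIdx n (!b) j)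
      (sideIdx_ne_sideIdx_not b j j) a)))
  rw [commutatorElement_epGen_sideIdx_self b hji.symm a] at h
  exact (Subgroup.mul_mem_cancel_left N (epGen_sideIdx_not_mem hn hN b hji.symm a)).mp h

lemma epGen_mem_of_sideIdx_mem (hn : 3 ≤ n)
    (hN : ∀ b {i j : Fin n} (hij : i ≠ j) (a : S),
      epGen S n (sideIdx n b i) (sideIdx n b j) (sideIdx_ne_sideIdx b hij) a ∈ N)
    (I J : Fin (2 * n)) (hIJ : I ≠ J) (a : S) : epGen S n I J hIJ a ∈ N := by
  obtain ⟨b, i, rfl⟩ := exists_sideIdx_eq I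
  obtain ⟨c, j, rfl⟩ := exists_sideIdx_eq J
  obtain rfl | rfl : c = b ∨ c = !b := by cases b <;> cases c <;> simp
  · exact hN c (by rintro rfl; exact hIJ rfl) a
  · obtain rfl | hij := eq_or_ne i j
    · exact epGen_sideIdx_not_self_mem hn hN b i a
    · exact epGen_sideIdx_not_mem hn hN b hij a

end NormalGeneration

lemma eq_top_of_forall_epGen_mem {S : Type*} [CommRing S] {n : ℕ} (N : Subgroup (EpGroup S n))
    (h : ∀ I J hIJ a, epGen S n I J hIJ a ∈ N) : N = ⊤ := by
  refine eq_top_iff.mpr (Subgroup.closure_closure_coe_preimage.symm.trans_le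
    ((Subgroup.closure_le N).mpr ?_))
  rintro ⟨_, _⟩ ⟨I, J, hIJ, a, rfl⟩
  exact h I J hIJ a

/-- The hyperbolic embedding `h(A) = diag(A, (Aᵀ)⁻¹)` maps `GL_n(R)`
into `Sp_{2n}(R)` and `E_n(R)` into `Ep_{2n}(R)`, and `Ep_{2n}(R)` is normally generated
by the hyperbolic image of `E_n(R)`. -/
theorem statement19 (R : Type*) [CommRing R] (n : ℕ) (hn : 3 ≤ n) :
    (∀ A : (Matrix (Fin n) (Fin n) R)ˣ, hypGL R n A ∈ SpGroup R n) ∧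
    (∀ A : (Matrix (Fin n) (Fin n) R)ˣ, A ∈ ElementaryGroup R n →
      hypGL R n A ∈ EpGroup R n) ∧
    Subgroup.normalClosure
      { x : ↥(EpGroup R n) | ∃ A ∈ ElementaryGroup R n, x.val = hypGL R n A } = ⊤ := by
  refine ⟨hypGL_mem_SpGroup, fun A hA => hypGL_mem_EpGroup hA,
    eq_top_of_forall_epGen_mem _ (epGen_mem_of_sideIdx_mem hn fun b i j hij a => ?_)⟩
  obtain ⟨A, hA, hAeq⟩ := exists_mem_elementaryGroup_hypGL_eq b hij a
  exact Subgroup.subset_normalClosure ⟨A, hA, Units.ext hAeq.symm⟩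

end Paper
end
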